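/- arXiv:1810.13158 — 2 statements merged into one kernel-verified Lean document; each statement's English description precedes it below -/
import Mathlib

section
/- Let κ, T, K > 0 and let g be analytic on S_κ := {z ∈ ℂ : dist(z, [0,∞)) < κ} with |g(z)| ≤ K e^{|z|/T} for all z ∈ S_κ. Define f_g(t) := (1/t) ∫_0^∞ g(τ) e^{-τ/t} dτ for t ≠ 0 with Re(1/t) > 1/T. Then for every κ̄ with 0 < κ̄ < κ and every T̄ with 0 < T̄ < T there exists a constant K' > 0 such that for every r ∈ ℕ and every t with Re(1/t) > 1/T̄ one has |f_g(t) − Σ_{k=0}^{r-1} (g^{(k)}(0)) t^k| ≤ K' · r! · κ̄^{-r} · |t|^r, where g^{(k)}(0) denotes the k-th complex derivative of g at 0 divided by k! and multiplied by k! (i.e. the k-th Taylor coefficient of g at 0 times k!). -/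
/-!
Cauchy's estimates on the discs of radius `σ ∈ (κ̄, κ)` centred on `[0, ∞)` give
`‖g⁽ⁿ⁾(x)‖ ≤ n! K e^{σ/T} σ⁻ⁿ e^{x/T}` for `x ≥ 0`. Hence for `Re(1/t) > 1/T` the moments
`Iₙ(t) = ∫₀^∞ g⁽ⁿ⁾(τ) e^{-τ/t} dτ` converge, with `‖Iₙ(t)‖ ≤ n! K e^{σ/T} σ⁻ⁿ / (Re(1/t) - 1/T)`,
and integration by parts gives `Iₙ = t g⁽ⁿ⁾(0) + t Iₙ₊₁`. Iterating,
`f_g(t) - ∑_{k<r} g⁽ᵏ⁾(0) tᵏ = tʳ (g⁽ʳ⁾(0) + I_{r+1}(t))`. The bound on `I_{r+1}` costs a factor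
`(r + 1) / σ`, which `(r + 1) (κ̄/σ)ʳ ≤ σ / (σ - κ̄)` absorbs when passing from `σ⁻ʳ` to `κ̄⁻ʳ`.
-/

open MeasureTheory Set Metric Filter Topology Complex

section ExponentialDecay

variable {E : Type*} [NormedAddCommGroup E] {φ : ℝ → E} {b C : ℝ}

lemma integrableOn_Ioi_of_norm_le_exp (hφ : ContinuousOn φ (Ici 0)) (hb : 0 < b)
    (h : ∀ τ, 0 ≤ τ → ‖φ τ‖ ≤ C * Real.exp (-b * τ)) : IntegrableOn φ (Ioi 0) := by
  refine Integrable.mono' ((exp_neg_integrableOn_Ioi 0 hb).const_mul C)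
    ((hφ.mono Ioi_subset_Ici_self).aestronglyMeasurable measurableSet_Ioi) ?_
  filter_upwards [ae_restrict_mem measurableSet_Ioi] with τ hτ
  exact h τ (le_of_lt hτ)

lemma norm_integral_Ioi_le_of_norm_le_exp [NormedSpace ℝ E] (hb : 0 < b)
    (h : ∀ τ, 0 ≤ τ → ‖φ τ‖ ≤ C * Real.exp (-b * τ)) : ‖∫ τ in Ioi 0, φ τ‖ ≤ C / b := by
  have hbound : ∫ τ in Ioi (0 : ℝ), C * Real.exp (-b * τ) = C / b := by
    rw [integral_const_mul, integral_exp_mul_Ioi (neg_lt_zero.2 hb), mul_zero, Real.exp_zero]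
    field_simp
  rw [← hbound]
  refine norm_integral_le_of_norm_le ((exp_neg_integrableOn_Ioi 0 hb).const_mul C) ?_
  filter_upwards [ae_restrict_mem measurableSet_Ioi] with τ hτ
  exact h τ (le_of_lt hτ)

lemma tendsto_atTop_zero_of_norm_le_exp (hb : 0 < b)
    (h : ∀ τ, 0 ≤ τ → ‖φ τ‖ ≤ C * Real.exp (-b * τ)) : Tendsto φ atTop (𝓝 0) := by
  have hdecay : Tendsto (fun τ => C * Real.exp (-b * τ)) atTop (𝓝 0) := by
    simpa using (Real.tendsto_exp_atBot.comp
      (tendsto_id.const_mul_atTop_of_neg (neg_lt_zero.2 hb))).const_mul C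
  exact squeeze_zero_norm' (eventually_ge_atTop 0 |>.mono h) hdecay

end ExponentialDecay

lemma norm_cexp_neg_div (τ : ℝ) (t : ℂ) :
    ‖cexp (-(τ : ℂ) / t)‖ = Real.exp (-(1 / t).re * τ) := by
  rw [norm_exp, neg_div, neg_re, div_eq_mul_one_div, re_ofReal_mul, neg_mul, mul_comm]

lemma integral_Ioi_mul_cexp_neg_div {f f' : ℝ → ℂ} {t : ℂ} (ht : t ≠ 0)
    (hf : ∀ τ ∈ Ici (0 : ℝ), HasDerivAt f (f' τ) τ)
    (hfi : IntegrableOn (fun τ => f τ * cexp (-(τ : ℂ) / t)) (Ioi 0))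
    (hf'i : IntegrableOn (fun τ => f' τ * cexp (-(τ : ℂ) / t)) (Ioi 0))
    (hlim : Tendsto (fun τ => f τ * cexp (-(τ : ℂ) / t)) atTop (𝓝 0)) :
    ∫ τ in Ioi 0, f τ * cexp (-(τ : ℂ) / t) =
      t * f 0 + t * ∫ τ in Ioi 0, f' τ * cexp (-(τ : ℂ) / t) := by
  have hderiv : ∀ τ ∈ Ici (0 : ℝ), HasDerivAt (fun s : ℝ => f s * cexp (-(s : ℂ) / t))
      (f' τ * cexp (-(τ : ℂ) / t) - t⁻¹ * (f τ * cexp (-(τ : ℂ) / t))) τ := by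
    intro τ hτ
    have he : HasDerivAt (fun s : ℝ => cexp (-(s : ℂ) / t)) (cexp (-(τ : ℂ) / t) * (-1 / t)) τ :=
      (((hasDerivAt_id (τ : ℂ)).neg.div_const t).cexp).comp_ofReal
    refine ((hf τ hτ).mul he).congr_deriv ?_
    ring
  have h := integral_Ioi_of_hasDerivAt_of_tendsto' hderiv (hf'i.sub (hfi.const_mul t⁻¹)) hlim
  rw [integral_sub hf'i (hfi.const_mul t⁻¹), integral_const_mul] at h
  simp only [ofReal_zero, neg_zero, zero_div, Complex.exp_zero, mul_one] at h
  linear_combination (-t) * h - (∫ τ in Ioi 0, f τ * cexp (-(τ : ℂ) / t)) * mul_inv_cancel₀ ht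

lemma one_div_mul_sub_sum_eq {𝕜 : Type*} [Field 𝕜] {a I : ℕ → 𝕜} {t : 𝕜} (ht : t ≠ 0)
    (h : ∀ n, I n = t * a n + t * I (n + 1)) (r : ℕ) :
    1 / t * I 0 - ∑ k ∈ Finset.range r, a k * t ^ k = t ^ r * (a r + I (r + 1)) := by
  induction r with
  | zero =>
    rw [h 0]
    field_simp
    simp
  | succ r ih =>
    rw [Finset.sum_range_succ, ← sub_sub, ih, h (r + 1)]
    ring

lemma succ_mul_pow_le_inv_one_sub {q : ℝ} (hq₀ : 0 ≤ q) (hq₁ : q < 1) (r : ℕ) :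
    (r + 1) * q ^ r ≤ (1 - q)⁻¹ :=
  calc (r + 1) * q ^ r = ∑ _i ∈ Finset.range (r + 1), q ^ r := by simp
    _ ≤ ∑ i ∈ Finset.range (r + 1), q ^ i :=
      Finset.sum_le_sum fun i hi =>
        pow_le_pow_of_le_one hq₀ hq₁.le (Nat.lt_succ_iff.1 (Finset.mem_range.1 hi))
    _ ≤ (1 - q)⁻¹ := by
      simpa [← Finset.range_eq_Ico] using geom_sum_Ico_le_of_lt_one (m := 0) (n := r + 1) hq₀ hq₁

lemma factorial_div_pow_add_le {κ σ c : ℝ} (hκ : 0 < κ) (hκσ : κ < σ) (hc : 0 ≤ c) (r : ℕ) :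
    r.factorial / σ ^ r + (r + 1).factorial / σ ^ (r + 1) * c ≤
      (1 + c / (σ - κ)) * (r.factorial * κ⁻¹ ^ r) := by
  have hσ : 0 < σ := hκ.trans hκσ
  have hq₁ : κ / σ < 1 := (div_lt_one hσ).2 hκσ
  have hgeom : (r + 1) * (κ / σ) ^ r ≤ σ / (σ - κ) := by
    refine (succ_mul_pow_le_inv_one_sub (by positivity) hq₁ r).trans_eq ?_
    field_simp
  calc r.factorial / σ ^ r + (r + 1).factorial / σ ^ (r + 1) * c
      = r.factorial * κ⁻¹ ^ r * ((κ / σ) ^ r + (r + 1) * (κ / σ) ^ r * (c / σ)) := by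
        rw [Nat.factorial_succ, div_pow, inv_pow]
        push_cast
        field_simp
        ring
    _ ≤ r.factorial * κ⁻¹ ^ r * (1 + σ / (σ - κ) * (c / σ)) := by
        gcongr
        exact pow_le_one₀ (by positivity) hq₁.le
    _ = (1 + c / (σ - κ)) * (r.factorial * κ⁻¹ ^ r) := by
        field_simp

lemma AnalyticOnNhd.iteratedDeriv {g : ℂ → ℂ} {U : Set ℂ} (hg : AnalyticOnNhd ℂ g U) (n : ℕ) :
    AnalyticOnNhd ℂ (iteratedDeriv n g) U := by
  rw [iteratedDeriv_eq_iterate]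
  exact hg.iterated_deriv n

lemma norm_iteratedDeriv_ofReal_le {g : ℂ → ℂ} {U : Set ℂ} {σ T K : ℝ}
    (hg : AnalyticOnNhd ℂ g U) (hbound : ∀ z ∈ U, ‖g z‖ ≤ K * Real.exp (‖z‖ / T))
    (hK : 0 ≤ K) (hT : 0 < T) (hσ : 0 < σ) (hU : ∀ x : ℝ, 0 ≤ x → closedBall (x : ℂ) σ ⊆ U)
    (n : ℕ) {x : ℝ} (hx : 0 ≤ x) :
    ‖iteratedDeriv n g x‖ ≤ n.factorial * (K * Real.exp (σ / T)) / σ ^ n * Real.exp (x / T) := by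
  have hball : ∀ z ∈ sphere (x : ℂ) σ, ‖g z‖ ≤ K * Real.exp (σ / T) * Real.exp (x / T) := by
    intro z hz
    have hz_norm : ‖z‖ ≤ σ + x := by
      calc ‖z‖ ≤ ‖z - x‖ + ‖(x : ℂ)‖ := norm_le_norm_sub_add z x
        _ = σ + x := by rw [← dist_eq_norm, mem_sphere.1 hz, norm_real, Real.norm_of_nonneg hx]
    calc ‖g z‖ ≤ K * Real.exp (‖z‖ / T) := hbound z (hU x hx (sphere_subset_closedBall hz))
      _ ≤ K * Real.exp ((σ + x) / T) := by gcongr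
      _ = K * Real.exp (σ / T) * Real.exp (x / T) := by rw [add_div, Real.exp_add, mul_assoc]
  have h := norm_iteratedDeriv_le_of_forall_mem_sphere_norm_le n hσ
    (hg.differentiableOn.diffContOnCl_ball (hU x hx)) hball
  exact h.trans_eq (by ring)

section LaplaceMoments

variable {g : ℂ → ℂ} {U : Set ℂ} {T : ℝ} {M : ℕ → ℝ} {t : ℂ}

noncomputable def laplaceMoment (g : ℂ → ℂ) (t : ℂ) (n : ℕ) : ℂ :=
  ∫ τ in Ioi (0 : ℝ), iteratedDeriv n g τ * cexp (-(τ : ℂ) / t)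

lemma norm_iteratedDeriv_ofReal_mul_cexp_le
    (hM : ∀ n (x : ℝ), 0 ≤ x → ‖iteratedDeriv n g x‖ ≤ M n * Real.exp (x / T))
    (n : ℕ) {τ : ℝ} (hτ : 0 ≤ τ) :
    ‖iteratedDeriv n g τ * cexp (-(τ : ℂ) / t)‖ ≤
      M n * Real.exp (-((1 / t).re - 1 / T) * τ) := by
  rw [norm_mul, norm_cexp_neg_div]
  calc ‖iteratedDeriv n g τ‖ * Real.exp (-(1 / t).re * τ)
      ≤ M n * Real.exp (τ / T) * Real.exp (-(1 / t).re * τ) := by gcongr; exact hM n τ hτ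
    _ = M n * Real.exp (-((1 / t).re - 1 / T) * τ) := by
      rw [mul_assoc, ← Real.exp_add]
      ring_nf

lemma continuousOn_iteratedDeriv_ofReal_mul_cexp (hg : AnalyticOnNhd ℂ g U)
    (hU : ∀ x : ℝ, 0 ≤ x → (x : ℂ) ∈ U) (n : ℕ) :
    ContinuousOn (fun τ : ℝ => iteratedDeriv n g τ * cexp (-(τ : ℂ) / t)) (Ici 0) :=
  ((hg.iteratedDeriv n).continuousOn.comp continuous_ofReal.continuousOn hU).mul
    (continuous_ofReal.neg.div_const t).cexp.continuousOn

lemma norm_laplaceMoment_le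
    (hM : ∀ n (x : ℝ), 0 ≤ x → ‖iteratedDeriv n g x‖ ≤ M n * Real.exp (x / T))
    (ht : 1 / T < (1 / t).re) (n : ℕ) :
    ‖laplaceMoment g t n‖ ≤ M n / ((1 / t).re - 1 / T) :=
  norm_integral_Ioi_le_of_norm_le_exp (sub_pos.2 ht)
    fun _ hτ => norm_iteratedDeriv_ofReal_mul_cexp_le hM n hτ

lemma laplaceMoment_eq (hg : AnalyticOnNhd ℂ g U) (hU : ∀ x : ℝ, 0 ≤ x → (x : ℂ) ∈ U)
    (hM : ∀ n (x : ℝ), 0 ≤ x → ‖iteratedDeriv n g x‖ ≤ M n * Real.exp (x / T))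
    (ht0 : t ≠ 0) (ht : 1 / T < (1 / t).re) (n : ℕ) :
    laplaceMoment g t n = t * iteratedDeriv n g 0 + t * laplaceMoment g t (n + 1) := by
  have hb := sub_pos.2 ht
  have hdecay := fun n (τ : ℝ) (hτ : 0 ≤ τ) =>
    norm_iteratedDeriv_ofReal_mul_cexp_le (t := t) hM n hτ
  have hint := fun n => integrableOn_Ioi_of_norm_le_exp
    (continuousOn_iteratedDeriv_ofReal_mul_cexp (t := t) hg hU n) hb (hdecay n)
  have hderiv : ∀ τ ∈ Ici (0 : ℝ), HasDerivAt (fun s : ℝ => iteratedDeriv n g s)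
      (iteratedDeriv (n + 1) g τ) τ := by
    intro τ hτ
    rw [iteratedDeriv_succ]
    exact ((hg.iteratedDeriv n) τ (hU τ hτ)).differentiableAt.hasDerivAt.comp_ofReal
  simpa only [laplaceMoment, ofReal_zero] using
    integral_Ioi_mul_cexp_neg_div ht0 hderiv (hint n) (hint (n + 1))
      (tendsto_atTop_zero_of_norm_le_exp hb (hdecay n))

lemma norm_one_div_mul_integral_sub_sum_le (hg : AnalyticOnNhd ℂ g U)
    (hU : ∀ x : ℝ, 0 ≤ x → (x : ℂ) ∈ U)
    (hM : ∀ n (x : ℝ), 0 ≤ x → ‖iteratedDeriv n g x‖ ≤ M n * Real.exp (x / T))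
    (ht0 : t ≠ 0) (ht : 1 / T < (1 / t).re) (r : ℕ) :
    ‖1 / t * (∫ τ : ℝ in Ioi 0, g τ * cexp (-(τ : ℂ) / t)) -
        ∑ k ∈ Finset.range r, iteratedDeriv k g 0 * t ^ k‖ ≤
      ‖t‖ ^ r * (M r + M (r + 1) / ((1 / t).re - 1 / T)) := by
  have hI0 : ∫ τ : ℝ in Ioi 0, g τ * cexp (-(τ : ℂ) / t) = laplaceMoment g t 0 := by
    simp only [laplaceMoment, iteratedDeriv_zero]
  rw [hI0, one_div_mul_sub_sum_eq ht0 (laplaceMoment_eq hg hU hM ht0 ht) r, norm_mul, norm_pow]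
  gcongr
  calc _ ≤ ‖iteratedDeriv r g 0‖ + ‖laplaceMoment g t (r + 1)‖ := norm_add_le _ _
    _ ≤ _ := add_le_add (by simpa using hM r 0 le_rfl) (norm_laplaceMoment_le hM ht _)

end LaplaceMoments

theorem stmt_6_general (κ T K : ℝ) (hT : 0 < T) (hK : 0 < K) (g : ℂ → ℂ)
    (hg : AnalyticOnNhd ℂ g {z : ℂ | Metric.infDist z (Complex.ofReal '' Set.Ici 0) < κ})
    (hbound : ∀ z : ℂ, Metric.infDist z (Complex.ofReal '' Set.Ici 0) < κ →
      ‖g z‖ ≤ K * Real.exp (‖z‖ / T)) :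
    ∀ κbar Tbar : ℝ, 0 < κbar → κbar < κ → 0 < Tbar → Tbar < T →
      ∃ K' : ℝ, 0 < K' ∧
        ∀ (r : ℕ) (t : ℂ), t ≠ 0 → 1 / Tbar < (1 / t).re →
          ‖(1 / t) * (∫ τ : ℝ in Set.Ioi (0 : ℝ), g τ * Complex.exp (-(τ : ℂ) / t)) -
                ∑ k ∈ Finset.range r, iteratedDeriv k g 0 * t ^ k‖ ≤
            K' * (Nat.factorial r) * κbar⁻¹ ^ r * ‖t‖ ^ r := by
  intro κbar Tbar hκbar hκbarκ hTbar hTbarT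
  obtain ⟨σ, hκbarσ, hσκ⟩ := exists_between hκbarκ
  have hT' : 1 / T < 1 / Tbar := one_div_lt_one_div_of_lt hTbar hTbarT
  set c := (1 / Tbar - 1 / T)⁻¹
  set A := K * Real.exp (σ / T)
  have hU : ∀ x : ℝ, 0 ≤ x →
      closedBall (x : ℂ) σ ⊆ {z : ℂ | infDist z (ofReal '' Ici 0) < κ} := fun x hx z hz =>
    (infDist_le_dist_of_mem (mem_image_of_mem _ hx)).trans_lt ((mem_closedBall.1 hz).trans_lt hσκ)
  have hσ : 0 < σ := hκbar.trans hκbarσ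
  refine ⟨A * (1 + c / (σ - κbar)), by positivity, fun r t ht0 ht => ?_⟩
  have hb : ((1 / t).re - 1 / T)⁻¹ ≤ c := inv_anti₀ (sub_pos.2 hT') (by linarith)
  calc _ ≤ ‖t‖ ^ r * A * (r.factorial / σ ^ r +
          (r + 1).factorial / σ ^ (r + 1) * ((1 / t).re - 1 / T)⁻¹) :=
        (norm_one_div_mul_integral_sub_sum_le (M := fun n => n.factorial * A / σ ^ n) hg
          (fun x hx => hU x hx (mem_closedBall_self hσ.le))
          (fun n x hx => norm_iteratedDeriv_ofReal_le hg hbound hK.le hT hσ hU n hx) ht0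
          (hT'.trans ht) r).trans_eq (by ring)
    _ ≤ ‖t‖ ^ r * A * (r.factorial / σ ^ r + (r + 1).factorial / σ ^ (r + 1) * c) := by gcongr
    _ ≤ ‖t‖ ^ r * A * ((1 + c / (σ - κbar)) * (r.factorial * κbar⁻¹ ^ r)) := by
        gcongr
        exact factorial_div_pow_add_le hκbar hκbarσ (inv_nonneg.2 (sub_pos.2 hT').le) r
    _ = A * (1 + c / (σ - κbar)) * r.factorial * κbar⁻¹ ^ r * ‖t‖ ^ r := by ring

/-- Nevanlinna's theorem, Laplace-transform direction: if `g` is analytic on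
`S_κ = {z : ℂ | dist(z, [0,∞)) < κ}` with `|g(z)| ≤ K e^{|z|/T}` there, then its Laplace
transform `f_g(t) = (1/t) ∫_0^∞ g(τ) e^{-τ/t} dτ` admits, for every `0 < κ̄ < κ` and
`0 < T̄ < T`, an asymptotic expansion with coefficients `g^{(k)}(0)` and remainder bound
`K' · r! · κ̄⁻ʳ · |t|^r`, valid for all `t` with `Re (1/t) > 1/T̄`. -/
theorem stmt_6 (κ T K : ℝ) (hκ : 0 < κ) (hT : 0 < T) (hK : 0 < K) (g : ℂ → ℂ)
    (hg : AnalyticOnNhd ℂ g {z : ℂ | Metric.infDist z (Complex.ofReal '' Set.Ici 0) < κ})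
    (hbound : ∀ z : ℂ, Metric.infDist z (Complex.ofReal '' Set.Ici 0) < κ →
      ‖g z‖ ≤ K * Real.exp (‖z‖ / T)) :
    ∀ κbar Tbar : ℝ, 0 < κbar → κbar < κ → 0 < Tbar → Tbar < T →
      ∃ K' : ℝ, 0 < K' ∧
        ∀ (r : ℕ) (t : ℂ), t ≠ 0 → 1 / Tbar < (1 / t).re →
          ‖(1 / t) * (∫ τ : ℝ in Set.Ioi (0 : ℝ), g τ * Complex.exp (-(τ : ℂ) / t)) -
                ∑ k ∈ Finset.range r, iteratedDeriv k g 0 * t ^ k‖ ≤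
            K' * (Nat.factorial r) * κbar⁻¹ ^ r * ‖t‖ ^ r :=
  stmt_6_general κ T K hT hK g hg hbound
end

section
/- Let κ, T > 0 and let f₁, f₂ be analytic functions on D_T := {t ∈ ℂ : t ≠ 0, Re(1/t) > 1/T} admitting asymptotic expansions with the SAME coefficient sequence (a_r)_{r∈ℕ}: there exist constants K₁, K₂ > 0 such that |f_i(t) − Σ_{k=0}^{r-1} a_k t^k| ≤ K_i · r! · κ^{-r} · |t|^r for i = 1, 2, all r ∈ ℕ and all t ∈ D_T. Then f₁ = f₂ on D_T; i.e. the Borel sum of a Borel summable formal power series is unique. -/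
/-!
In the variable `w = 1/t` the domain becomes the half-plane `Re w > 1/T`, and the difference
`G w = f₁ (1/w) - f₂ (1/w)` satisfies `‖G w‖ ≤ K r! (κ ‖w‖)⁻ʳ` for every `r`; summing these
bounds against the exponential series gives `‖G w‖ ≤ 2K exp (-κ ‖w‖ / 2)`. Such decay in every
direction of a half-plane forces `G = 0`: Phragmén–Lindelöf in a sector `|arg z| < σ` upgrades
it to `exp (-(κ / (2 cos σ)) Re z)`, and letting `σ → π/2` makes the rate arbitrarily large.
-/

open Filter Set Complex Real
open scoped Topology Nat

theorem mul_exp_half_le_of_forall_mul_pow_le {b B x : ℝ} (h : ∀ r : ℕ, b * x ^ r ≤ B * r !) :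
    b * rexp (x / 2) ≤ 2 * B := by
  have hexp : HasSum (fun r : ℕ ↦ b * ((x / 2) ^ r / r !)) (b * rexp (x / 2)) := by
    rw [Real.exp_eq_exp_ℝ]
    exact (NormedSpace.expSeries_div_hasSum_exp (x / 2)).mul_left b
  have hgeom : HasSum (fun r : ℕ ↦ B * (1 / 2) ^ r) (B * 2) := hasSum_geometric_two.mul_left B
  rw [mul_comm 2 B]
  refine hasSum_le (fun r ↦ ?_) hexp hgeom
  have hr : (0 : ℝ) < 2 ^ r * r ! := by positivity
  calc b * ((x / 2) ^ r / r !) = b * x ^ r / (2 ^ r * r !) := by rw [div_pow]; ring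
    _ ≤ B * r ! / (2 ^ r * r !) := div_le_div_of_nonneg_right (h r) hr.le
    _ = B * (1 / 2) ^ r := by rw [one_div, inv_pow]; field_simp

/-- Phragmén–Lindelöf in the strip `|Im u| < σ`, which `exp` maps onto the sector
`|arg z| < σ`: on its edges `Re z = cos σ * ‖z‖`, so the weight `exp (μ / cos σ * Re z)` is
exactly compensated by the decay of `g`. -/
theorem norm_comp_exp_mul_exp_le_of_abs_im_le {g : ℂ → ℂ} {A μ σ : ℝ} (hμ : 0 ≤ μ)
    (hg : DifferentiableOn ℂ g {z | 0 < z.re})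
    (hdecay : ∀ z : ℂ, 0 < z.re → ‖g z‖ * rexp (μ * ‖z‖) ≤ A)
    (hσ₀ : 0 < σ) (hσ : σ < π / 2) {u : ℂ} (hu : |u.im| ≤ σ) :
    ‖g (cexp u)‖ * rexp (μ / Real.cos σ * (cexp u).re) ≤ A := by
  set ν := μ / Real.cos σ
  have hcos : 0 < Real.cos σ := Real.cos_pos_of_mem_Ioo ⟨by linarith, hσ⟩
  have hν : 0 ≤ ν := div_nonneg hμ hcos.le
  set H : ℂ → ℂ := fun u ↦ g (cexp u) * cexp (ν * cexp u)
  have hHnorm (u : ℂ) : ‖H u‖ = ‖g (cexp u)‖ * rexp (ν * (cexp u).re) := by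
    simp only [H, norm_mul, Complex.norm_exp, re_ofReal_mul]
  have hre_pos (u : ℂ) (hu : u.im ∈ Icc (-σ) σ) : 0 < (cexp u).re := by
    rw [exp_re]
    exact mul_pos (Real.exp_pos _)
      (Real.cos_pos_of_mem_Ioo ⟨by linarith [hu.1], by linarith [hu.2]⟩)
  have hHd : DiffContOnCl ℂ H (im ⁻¹' Ioo (-σ) σ) := by
    refine DifferentiableOn.diffContOnCl fun u hu ↦ DifferentiableAt.differentiableWithinAt ?_
    rw [closure_preimage_im, closure_Ioo (by linarith)] at hu
    have hgd : DifferentiableAt ℂ g (cexp u) :=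
      hg.differentiableAt ((isOpen_lt continuous_const continuous_re).mem_nhds (hre_pos u hu))
    exact (hgd.comp u Complex.differentiableAt_exp).mul
      (Complex.differentiableAt_exp.const_mul _).cexp
  have hgrowth : H =O[comap (_root_.abs ∘ re) atTop ⊓ 𝓟 (im ⁻¹' Ioo (-σ) σ)]
      fun u ↦ rexp (ν * rexp (1 * |u.re|)) := by
    refine Asymptotics.IsBigO.of_bound A (eventually_inf_principal.2 (Eventually.of_forall
      fun u hu ↦ ?_))
    have hexp : ν * (cexp u).re ≤ μ * ‖cexp u‖ + ν * rexp (1 * |u.re|) := by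
      have : (cexp u).re ≤ rexp (1 * |u.re|) := calc
        (cexp u).re ≤ ‖cexp u‖ := re_le_norm _
        _ = rexp u.re := Complex.norm_exp u
        _ ≤ rexp (1 * |u.re|) := by rw [one_mul]; exact Real.exp_le_exp.2 (le_abs_self _)
      nlinarith [norm_nonneg (cexp u)]
    calc ‖H u‖ = ‖g (cexp u)‖ * rexp (ν * (cexp u).re) := hHnorm u
      _ ≤ ‖g (cexp u)‖ * rexp (μ * ‖cexp u‖) * rexp (ν * rexp (1 * |u.re|)) := by
        rw [mul_assoc, ← Real.exp_add]; gcongr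
      _ ≤ A * ‖rexp (ν * rexp (1 * |u.re|))‖ := by
        rw [Real.norm_of_nonneg (Real.exp_pos _).le]; gcongr
        exact hdecay _ (hre_pos u (Ioo_subset_Icc_self hu))
  have hbdry (u : ℂ) (hu : u.im = -σ ∨ u.im = σ) : ‖H u‖ ≤ A := by
    have hcosu : Real.cos u.im = Real.cos σ := by rcases hu with h | h <;> simp [h]
    have hre : (cexp u).re = Real.cos σ * ‖cexp u‖ := by
      rw [exp_re, Complex.norm_exp, hcosu, mul_comm]
    have hrate : ν * (cexp u).re = μ * ‖cexp u‖ := by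
      rw [hre, ← mul_assoc, div_mul_cancel₀ _ hcos.ne']
    rw [hHnorm, hrate]
    exact hdecay _ (by rw [hre]; exact mul_pos hcos (norm_pos_iff.2 (Complex.exp_ne_zero u)))
  obtain ⟨hu₁, hu₂⟩ := abs_le.1 hu
  have h := PhragmenLindelof.horizontal_strip hHd ⟨1, ?_, ν, hgrowth⟩
    (fun u hu ↦ hbdry u (Or.inl hu)) (fun u hu ↦ hbdry u (Or.inr hu)) hu₁ hu₂
  · rwa [hHnorm] at h
  · rw [sub_neg_eq_add, ← two_mul, one_lt_div (by positivity)]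
    linarith

theorem eq_zero_of_norm_mul_exp_le {g : ℂ → ℂ} {A μ : ℝ} (hμ : 0 < μ)
    (hg : DifferentiableOn ℂ g {z | 0 < z.re})
    (hdecay : ∀ z : ℂ, 0 < z.re → ‖g z‖ * rexp (μ * ‖z‖) ≤ A) {z : ℂ} (hz : 0 < z.re) :
    g z = 0 := by
  have harg : |(Complex.log z).im| < π / 2 := by
    rw [Complex.log_im]; exact abs_arg_lt_pi_div_two_iff.2 (Or.inl hz)
  have hbound : ∀ σ ∈ Ioo |(Complex.log z).im| (π / 2),
      ‖g z‖ ≤ A * rexp (-(μ / Real.cos σ * z.re)) := by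
    rintro σ ⟨hσ₁, hσ₂⟩
    have h := norm_comp_exp_mul_exp_le_of_abs_im_le hμ.le hg hdecay
      ((abs_nonneg _).trans_lt hσ₁) hσ₂ hσ₁.le
    rw [Complex.exp_log (by rintro rfl; simp at hz)] at h
    rwa [Real.exp_neg, ← div_eq_mul_inv, le_div_iff₀ (Real.exp_pos _)]
  have hrate : Tendsto (fun σ ↦ μ / Real.cos σ * z.re) (𝓝[<] (π / 2)) atTop := by
    simp only [div_eq_mul_inv]
    exact ((tendsto_inv_nhdsGT_zero.comp Real.tendsto_cos_pi_div_two).const_mul_atTop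
      hμ).atTop_mul_const hz
  have hlim : Tendsto (fun σ ↦ A * rexp (-(μ / Real.cos σ * z.re))) (𝓝[<] (π / 2)) (𝓝 0) := by
    simpa using (Real.tendsto_exp_atBot.comp (tendsto_neg_atTop_atBot.comp hrate)).const_mul A
  exact norm_le_zero_iff.1 <|
    ge_of_tendsto hlim (eventually_of_mem (Ioo_mem_nhdsLT harg) hbound)

theorem eq_zero_of_norm_mul_exp_le_of_lt_re {g : ℂ → ℂ} {A μ a : ℝ} (hμ : 0 < μ)
    (hg : DifferentiableOn ℂ g {z | a < z.re})
    (hdecay : ∀ z : ℂ, a < z.re → ‖g z‖ * rexp (μ * ‖z‖) ≤ A) {z : ℂ} (hz : a < z.re) :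
    g z = 0 := by
  have hshift : DifferentiableOn ℂ (fun z ↦ g (z + a)) {z | 0 < z.re} :=
    hg.comp (differentiableOn_id.add_const _) fun z hz ↦ by simpa using hz
  have hdecay' (z : ℂ) (hz : 0 < z.re) :
      ‖g (z + a)‖ * rexp (μ * ‖z‖) ≤ A * rexp (μ * |a|) := by
    have hnorm : ‖z‖ ≤ ‖z + a‖ + |a| := by
      simpa using norm_sub_le (z + a) (a : ℂ)
    calc ‖g (z + a)‖ * rexp (μ * ‖z‖)
        ≤ ‖g (z + a)‖ * rexp (μ * ‖z + a‖) * rexp (μ * |a|) := by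
          rw [mul_assoc, ← Real.exp_add, ← mul_add]; gcongr
      _ ≤ A * rexp (μ * |a|) := by gcongr; exact hdecay _ (by simpa using hz)
  simpa using eq_zero_of_norm_mul_exp_le hμ hshift hdecay' (z := z - a) (by simpa using hz)

theorem stmt_8_general (κ T : ℝ) (hκ : 0 < κ) (hT : 0 < T) (f₁ f₂ : ℂ → ℂ) (a : ℕ → ℂ)
    (K₁ K₂ : ℝ)
    (hf₁ : AnalyticOnNhd ℂ f₁ {t : ℂ | t ≠ 0 ∧ 1 / T < (1 / t).re})
    (hf₂ : AnalyticOnNhd ℂ f₂ {t : ℂ | t ≠ 0 ∧ 1 / T < (1 / t).re})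
    (hexp₁ : ∀ (r : ℕ) (t : ℂ), t ≠ 0 → 1 / T < (1 / t).re →
      ‖f₁ t - ∑ k ∈ Finset.range r, a k * t ^ k‖ ≤
        K₁ * (Nat.factorial r) * κ⁻¹ ^ r * ‖t‖ ^ r)
    (hexp₂ : ∀ (r : ℕ) (t : ℂ), t ≠ 0 → 1 / T < (1 / t).re →
      ‖f₂ t - ∑ k ∈ Finset.range r, a k * t ^ k‖ ≤
        K₂ * (Nat.factorial r) * κ⁻¹ ^ r * ‖t‖ ^ r) :
    ∀ t : ℂ, t ≠ 0 → 1 / T < (1 / t).re → f₁ t = f₂ t := by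
  have hne {w : ℂ} (hw : 1 / T < w.re) : w ≠ 0 := by
    rintro rfl; simp only [zero_re] at hw; linarith [one_div_pos.2 hT]
  have hinv {w : ℂ} (hw : 1 / T < w.re) : w⁻¹ ≠ 0 ∧ 1 / T < (1 / w⁻¹).re :=
    ⟨inv_ne_zero (hne hw), by rwa [one_div w⁻¹, inv_inv]⟩
  set G : ℂ → ℂ := fun w ↦ f₁ w⁻¹ - f₂ w⁻¹
  have hGd : DifferentiableOn ℂ G {w | 1 / T < w.re} := fun w hw ↦
    (((hf₁ _ (hinv hw)).differentiableAt.comp w (differentiableAt_inv (hne hw))).sub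
      ((hf₂ _ (hinv hw)).differentiableAt.comp w
        (differentiableAt_inv (hne hw)))).differentiableWithinAt
  have hdecay (w : ℂ) (hw : 1 / T < w.re) : ‖G w‖ * rexp (κ / 2 * ‖w‖) ≤ 2 * (K₁ + K₂) := by
    rw [div_mul_eq_mul_div]
    refine mul_exp_half_le_of_forall_mul_pow_le fun r ↦ ?_
    set S := ∑ k ∈ Finset.range r, a k * w⁻¹ ^ k
    have hG : ‖G w‖ ≤ (K₁ + K₂) * r ! * κ⁻¹ ^ r * ‖w⁻¹‖ ^ r := calc
      ‖G w‖ ≤ ‖f₁ w⁻¹ - S‖ + ‖f₂ w⁻¹ - S‖ := by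
        rw [norm_sub_rev (f₂ w⁻¹) S]; exact norm_sub_le_norm_sub_add_norm_sub _ _ _
      _ ≤ _ := add_le_add (hexp₁ r _ (hinv hw).1 (hinv hw).2) (hexp₂ r _ (hinv hw).1 (hinv hw).2)
      _ = _ := by ring
    calc ‖G w‖ * (κ * ‖w‖) ^ r
        ≤ (K₁ + K₂) * r ! * κ⁻¹ ^ r * ‖w⁻¹‖ ^ r * (κ * ‖w‖) ^ r := by gcongr
      _ = (K₁ + K₂) * r ! * (κ⁻¹ * ‖w‖⁻¹ * (κ * ‖w‖)) ^ r := by rw [norm_inv]; ring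
      _ = (K₁ + K₂) * r ! := by
          rw [mul_mul_mul_comm, inv_mul_cancel₀ hκ.ne',
            inv_mul_cancel₀ (norm_ne_zero_iff.2 (hne hw))]
          simp
  intro t _ htT
  have hG0 := eq_zero_of_norm_mul_exp_le_of_lt_re (half_pos hκ) hGd hdecay (z := t⁻¹)
    (by rwa [← one_div])
  simpa [G, sub_eq_zero] using hG0

/-- Uniqueness of the Borel sum: two functions analytic on
`D_T = {t : ℂ | t ≠ 0 ∧ Re (1/t) > 1/T}` admitting asymptotic expansions with the same
coefficients `(a_r)` and remainders bounded by `K_i · r! · κ⁻ʳ · |t|^r` coincide on `D_T`. -/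
theorem stmt_8 (κ T : ℝ) (hκ : 0 < κ) (hT : 0 < T) (f₁ f₂ : ℂ → ℂ) (a : ℕ → ℂ)
    (K₁ K₂ : ℝ) (hK₁ : 0 < K₁) (hK₂ : 0 < K₂)
    (hf₁ : AnalyticOnNhd ℂ f₁ {t : ℂ | t ≠ 0 ∧ 1 / T < (1 / t).re})
    (hf₂ : AnalyticOnNhd ℂ f₂ {t : ℂ | t ≠ 0 ∧ 1 / T < (1 / t).re})
    (hexp₁ : ∀ (r : ℕ) (t : ℂ), t ≠ 0 → 1 / T < (1 / t).re →
      ‖f₁ t - ∑ k ∈ Finset.range r, a k * t ^ k‖ ≤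
        K₁ * (Nat.factorial r) * κ⁻¹ ^ r * ‖t‖ ^ r)
    (hexp₂ : ∀ (r : ℕ) (t : ℂ), t ≠ 0 → 1 / T < (1 / t).re →
      ‖f₂ t - ∑ k ∈ Finset.range r, a k * t ^ k‖ ≤
        K₂ * (Nat.factorial r) * κ⁻¹ ^ r * ‖t‖ ^ r) :
    ∀ t : ℂ, t ≠ 0 → 1 / T < (1 / t).re → f₁ t = f₂ t :=
  stmt_8_general κ T hκ hT f₁ f₂ a K₁ K₂ hf₁ hf₂ hexp₁ hexp₂
end
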